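/- If t ∈ Λ_a, then for every derivation of x_1:P_1, …, x_k:P_k ⊢ t : Q there exists 1 ≤ i ≤ k such that P_i ≠ 0 (the empty multiset). -/

import Mathlib

/-! Terms of the shuffling calculus λ_sh. -/

inductive Term : Type
  | var : ℕ → Term
  | lam : ℕ → Term → Term
  | app : Term → Term → Term
deriving DecidableEq

namespace Term

/-- Values: variables and abstractions. -/
inductive IsValue : Term → Prop
  | var (x : ℕ) : IsValue (var x)
  | lam (x : ℕ) (t : Term) : IsValue (lam x t)

/-- Free variables. -/
def fv : Term → Finset ℕ
  | var x => {x}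
  | lam x t => fv t \ {x}
  | app t u => fv t ∪ fv u

/-- Substitution of `v` for the free occurrences of `x` in a term. -/
def subst : Term → ℕ → Term → Term
  | var y, x, v => if y = x then v else var y
  | lam y t, x, v => if y = x then lam y t else lam y (subst t x v)
  | app t u, x, v => app (subst t x v) (subst u x v)

end Term

open Term

/-- The β_v root step: (λx.t)v ↦ t{v/x} for v a value. -/
inductive RootBeta : Term → Term → Prop
  | red (x : ℕ) (t v : Term) : IsValue v →
      RootBeta (.app (.lam x t) v) (t.subst x v)

/-- The σ1 root step: ((λx.t)u)s ↦ ((λx.t s))u with x ∉ FV(s). -/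
inductive RootSigma1 : Term → Term → Prop
  | red (x : ℕ) (t u s : Term) : x ∉ s.fv →
      RootSigma1 (.app (.app (.lam x t) u) s) (.app (.lam x (.app t s)) u)

/-- The σ3 root step: v((λx.s)u) ↦ ((λx.v s))u for v a value with x ∉ FV(v). -/
inductive RootSigma3 : Term → Term → Prop
  | red (x : ℕ) (v s u : Term) : IsValue v → x ∉ v.fv →
      RootSigma3 (.app v (.app (.lam x s) u)) (.app (.lam x (.app v s)) u)

/-- σ = σ1 ∪ σ3. -/
def RootSigma (t u : Term) : Prop := RootSigma1 t u ∨ RootSigma3 t u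

/-- sh = β_v ∪ σ. -/
def RootSh (t u : Term) : Prop := RootBeta t u ∨ RootSigma t u

/-- Closure of a root step under arbitrary one-hole contexts
    C ::= ⟨·⟩ | λx.C | C t | t C. -/
inductive FStep (r : Term → Term → Prop) : Term → Term → Prop
  | root {t t'} : r t t' → FStep r t t'
  | lam {t t'} (x : ℕ) : FStep r t t' → FStep r (.lam x t) (.lam x t')
  | appL {t t'} (u : Term) : FStep r t t' → FStep r (.app t u) (.app t' u)
  | appR {u u'} (t : Term) : FStep r u u' → FStep r (.app t u) (.app t u')

/-- Closure of a root step under balanced contexts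
    B ::= ⟨·⟩ | (λx.B)t | B t | t B. -/
inductive BStep (r : Term → Term → Prop) : Term → Term → Prop
  | root {t t'} : r t t' → BStep r t t'
  | lamApp {t t'} (x : ℕ) (u : Term) : BStep r t t' →
      BStep r (.app (.lam x t) u) (.app (.lam x t') u)
  | appL {t t'} (u : Term) : BStep r t t' → BStep r (.app t u) (.app t' u)
  | appR {u u'} (t : Term) : BStep r u u' → BStep r (.app t u) (.app t u')

/-- `t` is normal for the reduction `r`. -/
def NormalFor (r : Term → Term → Prop) (t : Term) : Prop := ∀ u, ¬ r t u

/-- `t` is `r`-normalizable. -/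
def Normalizable (r : Term → Term → Prop) (t : Term) : Prop :=
  ∃ u, Relation.ReflTransGen r t u ∧ NormalFor r u

/-- `t` is strongly `r`-normalizable: no infinite `r`-sequence from `t`. -/
def StronglyNormalizable (r : Term → Term → Prop) (t : Term) : Prop :=
  Acc (fun a b => r b a) t

/-- Confluence of a reduction. -/
def Confluent (r : Term → Term → Prop) : Prop :=
  ∀ a b c, Relation.ReflTransGen r a b → Relation.ReflTransGen r a c →
    ∃ d, Relation.ReflTransGen r b d ∧ Relation.ReflTransGen r c d

/-- Strong normalization of a reduction. -/
def StronglyNormalizing (r : Term → Term → Prop) : Prop :=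
  WellFounded (fun a b => r b a)

/-! The sets Λ_a and Λ_n: a ::= x v | x a | a n and n ::= v | a | (λx.n)a. -/

mutual
  inductive LamA : Term → Prop
    | varVal (x : ℕ) (v : Term) : IsValue v → LamA (.app (.var x) v)
    | varA (x : ℕ) (a : Term) : LamA a → LamA (.app (.var x) a)
    | appAN (a n : Term) : LamA a → LamN n → LamA (.app a n)
  inductive LamN : Term → Prop
    | val (v : Term) : IsValue v → LamN v
    | ofA (a : Term) : LamA a → LamN a
    | redex (x : ℕ) (n a : Term) : LamN n → LamA a → LamN (.app (.lam x n) a)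
end

/-! Positive types: finite multisets (represented as lists) of pairs of
    positive types. -/

inductive PType : Type
  | node : List (PType × PType) → PType

namespace PType

/-- The empty positive type 0. -/
def zero : PType := node []

/-- Multiset union of positive types. -/
def union : PType → PType → PType
  | node l, node l' => node (l ++ l')

/-- Union of a list of positive types. -/
def listUnion (l : List PType) : PType := l.foldr union zero

end PType

/-- Type environments: maps from variables to positive types. -/
def Env : Type := ℕ → PType

namespace Env

/-- The empty environment. -/
def zero : Env := fun _ => PType.zero

/-- The environment x : P. -/
def single (x : ℕ) (P : PType) : Env := fun y => if y = x then P else PType.zero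

/-- Pointwise multiset union of environments. -/
def union (Γ Δ : Env) : Env := fun y => (Γ y).union (Δ y)

/-- `Γ, x : P` : reassign `x` to `P` in `Γ`. -/
def update (Γ : Env) (x : ℕ) (P : PType) : Env := fun y => if y = x then P else Γ y

/-- Union of a list of environments. -/
def listUnion (l : List Env) : Env := fun y => PType.listUnion (l.map (fun Γ => Γ y))

/-- Domain of an environment. -/
def dom (Γ : Env) : Set ℕ := {x | Γ x ≠ PType.zero}

end Env

/-! Type derivations of the non-idempotent intersection type system.
    The n-ary λ-rule is presented via the two constructors `lamNil`
    (no premises) and `lamCons` (one more premise). -/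

inductive Deriv : Env → Term → PType → Type
  | ax (x : ℕ) (P : PType) : Deriv (Env.single x P) (.var x) P
  | lamNil (x : ℕ) (t : Term) : Deriv Env.zero (.lam x t) PType.zero
  | lamCons {Γ Δ : Env} {x : ℕ} {t : Term} {P Q : PType} {L : List (PType × PType)} :
      Deriv (Γ.update x P) t Q → Deriv Δ (.lam x t) (.node L) →
      Deriv ((Γ.update x PType.zero).union Δ) (.lam x t) (.node ((P, Q) :: L))
  | app {Γ Δ : Env} {t u : Term} {P Q : PType} :
      Deriv Γ t (.node [(P, Q)]) → Deriv Δ u P →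
      Deriv (Γ.union Δ) (.app t u) Q

/-- The size of a derivation: its number of @-rules. -/
def Deriv.size {Γ : Env} {t : Term} {P : PType} : Deriv Γ t P → ℕ
  | .ax _ _ => 0
  | .lamNil _ _ => 0
  | .lamCons d₁ d₂ => d₁.size + d₂.size
  | .app d₁ d₂ => d₁.size + d₂.size + 1

/-- The environment x_1 : P_1, …, x_k : P_k. -/
def envOfLists : List ℕ → List PType → Env
  | x :: xs, P :: Ps => (Env.single x P).union (envOfLists xs Ps)
  | _, _ => Env.zero

/-- A list of (pairwise distinct) variables suitable for `t`. -/
def Suitable (xs : List ℕ) (t : Term) : Prop :=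
  xs.Nodup ∧ ∀ x ∈ t.fv, x ∈ xs

/-- Relational semantics of `t` with respect to the list of variables `xs`. -/
def sem (xs : List ℕ) (t : Term) : Set (List PType × PType) :=
  { p | p.1.length = xs.length ∧ Nonempty (Deriv (envOfLists xs p.1) t p.2) }

/-- The set of sizes of typing derivations for `t`. -/
def derivSizes (t : Term) : Set ℕ :=
  { n | ∃ (Γ : Env) (Q : PType) (π : Deriv Γ t Q), π.size = n }

/-- The size ⌊t⌋ of a sh̄-normal term. -/
def nsize : Term → ℕ
  | .var _ => 0
  | .lam _ _ => 0
  | .app (.lam _ n) u => nsize n + nsize u + 1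
  | .app t u => nsize t + nsize u + 1

/-- sh̄-reduction sequences from `t` to `u` with exactly `k` β_v-steps. -/
inductive ShSeq : Term → Term → ℕ → Prop
  | refl (t : Term) : ShSeq t t 0
  | beta {t t' u : Term} {k : ℕ} : BStep RootBeta t t' → ShSeq t' u k →
      ShSeq t u (k + 1)
  | sigma {t t' u : Term} {k : ℕ} : BStep RootSigma t t' → ShSeq t' u k →
      ShSeq t u k

theorem PType.union_eq_zero_iff {P Q : PType} :
    P.union Q = PType.zero ↔ P = PType.zero ∧ Q = PType.zero := by
  cases P
  cases Q
  simp [PType.union, PType.zero]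

theorem PType.node_singleton_ne_zero (p : PType × PType) : PType.node [p] ≠ PType.zero := by
  simp [PType.zero]

/-- The head variable of a term of Λ_a is applied to an argument, so it is typed with a
singleton multiset `[⟨P, Q⟩] ≠ 0`. -/
theorem LamA.exists_env_ne_zero {t : Term} (ht : LamA t) {Γ : Env} {Q : PType}
    (π : Deriv Γ t Q) : ∃ x, Γ x ≠ PType.zero := by
  induction π with
  | ax | lamNil | lamCons => cases ht
  | app π₁ _ ih₁ =>
    simp only [Env.union, ne_eq, PType.union_eq_zero_iff, not_and_or]
    cases ht with
    | appAN _ _ ha _ => exact (ih₁ ha).imp fun _ => Or.inl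
    | varVal x | varA x =>
      cases π₁
      exact ⟨x, .inl (by simpa [Env.single] using PType.node_singleton_ne_zero _)⟩

theorem exists_mem_ne_zero_of_envOfLists_ne_zero {xs : List ℕ} {Ps : List PType} {y : ℕ}
    (h : envOfLists xs Ps y ≠ PType.zero) : ∃ P ∈ Ps, P ≠ PType.zero := by
  induction xs generalizing Ps with
  | nil => exact absurd rfl h
  | cons x xs ih =>
    cases Ps with
    | nil => exact absurd rfl h
    | cons P Ps =>
      simp only [envOfLists, Env.union, ne_eq, PType.union_eq_zero_iff, not_and_or] at h
      rcases h with hP | hPs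
      · refine ⟨P, List.mem_cons_self, fun hP0 => hP ?_⟩
        simp [Env.single, hP0]
      · obtain ⟨P', hP', hne⟩ := ih hPs
        exact ⟨P', List.mem_cons_of_mem P hP', hne⟩

/-- terms of Λ_a need a nonempty type in the environment. -/
theorem lamA_environment_nonempty (t : Term) (ht : LamA t) (xs : List ℕ)
    (hnd : xs.Nodup) (Ps : List PType) (hlen : Ps.length = xs.length)
    (Q : PType) (π : Deriv (envOfLists xs Ps) t Q) :
    ∃ i : Fin Ps.length, Ps.get i ≠ PType.zero := by
  obtain ⟨y, hy⟩ := ht.exists_env_ne_zero π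
  obtain ⟨P, hP, hne⟩ := exists_mem_ne_zero_of_envOfLists_ne_zero hy
  obtain ⟨i, rfl⟩ := List.get_of_mem hP
  exact ⟨i, hne⟩
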